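/- For all γ > 0 and all η, γ₁ ∈ ℝ, ∫_ℝ e^{−γ z² + η z} · Erf(γ₁ z) dz = √(π/γ) · e^{η²/(4γ)} · Erf( γ₁ η / (2 √(γ² + γ γ₁²)) ), where Erf(u) = (2/√π) ∫_0^u e^{−s²} ds. -/

import Mathlib

open MeasureTheory Real

/-- The error function `Erf u = (2/√π) ∫_0^u e^{-s²} ds`. -/
noncomputable def Erf (u : ℝ) : ℝ :=
  (2 / Real.sqrt Real.pi) * ∫ s in (0 : ℝ)..u, Real.exp (-s ^ 2)

lemma erf_zero : Erf 0 = 0 := by simp [Erf]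

lemma continuous_exp_neg_sq : Continuous fun s : ℝ => Real.exp (-s ^ 2) := by continuity

lemma hasDerivAt_erf (u : ℝ) :
    HasDerivAt Erf (2 / Real.sqrt Real.pi * Real.exp (-u ^ 2)) u := by
  have h := intervalIntegral.integral_hasDerivAt_right
    (f := fun s : ℝ => Real.exp (-s ^ 2)) (a := 0) (b := u)
    (continuous_exp_neg_sq.intervalIntegrable _ _)
    (continuous_exp_neg_sq.stronglyMeasurableAtFilter _ _)
    continuous_exp_neg_sq.continuousAt
  exact h.const_mul (2 / Real.sqrt Real.pi)

lemma continuous_erf : Continuous Erf :=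
  (Differentiable.continuous fun u => (hasDerivAt_erf u).differentiableAt)

lemma abs_erf_le (u : ℝ) : |Erf u| ≤ 2 / Real.sqrt Real.pi * |u| := by
  have h : ‖∫ s in (0:ℝ)..u, Real.exp (-s ^ 2)‖ ≤ 1 * |u - 0| := by
    apply intervalIntegral.norm_integral_le_of_norm_le_const
    intro s _
    rw [Real.norm_eq_abs, abs_of_pos (Real.exp_pos _)]
    exact Real.exp_le_one_iff.2 (neg_nonpos.2 (sq_nonneg _))
  rw [Real.norm_eq_abs, sub_zero, one_mul] at h
  have h2 : (0:ℝ) ≤ 2 / Real.sqrt Real.pi := by positivity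
  calc |Erf u| = 2 / Real.sqrt Real.pi * |∫ s in (0:ℝ)..u, Real.exp (-s ^ 2)| := by
        rw [Erf, abs_mul, abs_of_nonneg h2]
    _ ≤ 2 / Real.sqrt Real.pi * |u| := by
        exact mul_le_mul_of_nonneg_left h h2

/-- Pointwise bound `exp(-a z² + b z) ≤ exp(b²/(2a)) exp(-(a/2) z²)`. -/
lemma exp_quad_le (a b z : ℝ) (ha : 0 < a) :
    Real.exp (-a * z ^ 2 + b * z)
      ≤ Real.exp (b ^ 2 / (2 * a)) * Real.exp (-(a / 2) * z ^ 2) := by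
  rw [← Real.exp_add]
  apply Real.exp_le_exp.2
  rw [← sub_nonneg]
  have key : b ^ 2 / (2 * a) + -(a / 2) * z ^ 2 - (-a * z ^ 2 + b * z)
      = (a * z - b) ^ 2 / (2 * a) := by
    field_simp
    ring
  rw [key]
  positivity

lemma integrable_abs_gauss (a b : ℝ) (ha : 0 < a) :
    Integrable (fun z : ℝ => |z| * Real.exp (-a * z ^ 2 + b * z)) := by
  have base : Integrable (fun z : ℝ => z * Real.exp (-(a/2) * z ^ 2)) := by
    have := integrable_rpow_mul_exp_neg_mul_sq (b := a/2) (by positivity) (s := 1) (by norm_num)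
    simpa using this
  have base2 : Integrable (fun z : ℝ => Real.exp (b ^ 2 / (2*a)) * |z * Real.exp (-(a/2) * z ^ 2)|) :=
    (base.abs.const_mul _)
  apply base2.mono'
  · apply Continuous.aestronglyMeasurable
    continuity
  · filter_upwards with z
    rw [Real.norm_eq_abs, abs_mul, abs_abs, abs_of_pos (Real.exp_pos _), abs_mul,
      abs_of_pos (Real.exp_pos _)]
    rw [show Real.exp (b^2/(2*a)) * (|z| * Real.exp (-(a/2) * z^2))
        = |z| * (Real.exp (b^2/(2*a)) * Real.exp (-(a/2) * z^2)) by ring]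
    exact mul_le_mul_of_nonneg_left (exp_quad_le a b z ha) (abs_nonneg z)

lemma integrable_gauss_lin (a b : ℝ) (ha : 0 < a) :
    Integrable (fun z : ℝ => Real.exp (-a * z ^ 2 + b * z)) := by
  have base : Integrable (fun z : ℝ => Real.exp (b ^ 2 / (2*a)) * Real.exp (-(a/2) * z ^ 2)) :=
    (integrable_exp_neg_mul_sq (by positivity : (0:ℝ) < a/2)).const_mul _
  apply base.mono'
  · apply Continuous.aestronglyMeasurable; continuity
  · filter_upwards with z
    rw [Real.norm_eq_abs, abs_of_pos (Real.exp_pos _)]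
    exact exp_quad_le a b z ha

lemma integrable_mul_gauss_lin (a b : ℝ) (ha : 0 < a) :
    Integrable (fun z : ℝ => z * Real.exp (-a * z ^ 2 + b * z)) := by
  apply (integrable_abs_gauss a b ha).mono'
  · apply Continuous.aestronglyMeasurable; continuity
  · filter_upwards with z
    rw [Real.norm_eq_abs, abs_mul, abs_of_pos (Real.exp_pos _)]

lemma complete_square (a b z : ℝ) (ha : a ≠ 0) :
    Real.exp (-a * z ^ 2 + b * z)
      = Real.exp (-a * (z - b / (2 * a)) ^ 2) * Real.exp (b ^ 2 / (4 * a)) := by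
  rw [← Real.exp_add]
  congr 1
  field_simp
  ring

lemma integral_gauss_lin (a b : ℝ) (ha : 0 < a) :
    (∫ z : ℝ, Real.exp (-a * z ^ 2 + b * z))
      = Real.sqrt (Real.pi / a) * Real.exp (b ^ 2 / (4 * a)) := by
  simp_rw [complete_square a b _ ha.ne']
  rw [integral_mul_const,
    integral_sub_right_eq_self (fun z : ℝ => Real.exp (-a * z ^ 2)) (b / (2 * a)),
    integral_gaussian]

lemma integral_odd_gauss (a : ℝ) : (∫ y : ℝ, y * Real.exp (-a * y ^ 2)) = 0 := by
  have h := integral_neg_eq_self (fun y : ℝ => y * Real.exp (-a * y ^ 2)) volume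
  simp only [neg_sq] at h
  have h2 : (∫ y : ℝ, -y * Real.exp (-a * y ^ 2))
      = -∫ y : ℝ, y * Real.exp (-a * y ^ 2) := by
    simp_rw [neg_mul]
    exact integral_neg _
  rw [h2] at h
  linarith

lemma integral_mul_gauss_lin (a b : ℝ) (ha : 0 < a) :
    (∫ z : ℝ, z * Real.exp (-a * z ^ 2 + b * z))
      = b / (2 * a) * (Real.sqrt (Real.pi / a) * Real.exp (b ^ 2 / (4 * a))) := by
  set μ := b / (2 * a) with hμ
  have key : ∀ z : ℝ, z * Real.exp (-a * z ^ 2 + b * z)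
      = ((z - μ) + μ) * Real.exp (-a * (z - μ) ^ 2) * Real.exp (b ^ 2 / (4 * a)) := by
    intro z
    rw [complete_square a b z ha.ne', ← hμ]
    ring
  simp_rw [key]
  rw [integral_mul_const]
  have hshift : (∫ z : ℝ, ((z - μ) + μ) * Real.exp (-a * (z - μ) ^ 2))
      = ∫ y : ℝ, (y + μ) * Real.exp (-a * y ^ 2) :=
    integral_sub_right_eq_self (fun y : ℝ => (y + μ) * Real.exp (-a * y ^ 2)) μ
  rw [hshift]
  have hint1 : Integrable (fun y : ℝ => y * Real.exp (-a * y ^ 2)) := by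
    simpa using integrable_mul_gauss_lin a 0 ha
  have hint2 : Integrable (fun y : ℝ => μ * Real.exp (-a * y ^ 2)) :=
    (integrable_exp_neg_mul_sq ha).const_mul μ
  have hsplit : (∫ y : ℝ, (y + μ) * Real.exp (-a * y ^ 2))
      = (∫ y : ℝ, y * Real.exp (-a * y ^ 2)) + ∫ y : ℝ, μ * Real.exp (-a * y ^ 2) := by
    rw [← integral_add hint1 hint2]
    congr 1 with y
    ring
  rw [hsplit, integral_odd_gauss, zero_add, integral_const_mul, integral_gaussian]
  ring

/-- Gaussian–error-function integral identity (Korotkov 2.7.1.6):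
`∫ e^{-γz² + ηz} Erf(γ₁ z) dz = √(π/γ) e^{η²/(4γ)} Erf(γ₁ η / (2√(γ² + γγ₁²)))`. -/
theorem stmt_13 (γ η γ₁ : ℝ) (hγ : 0 < γ) :
    (∫ z : ℝ, Real.exp (-γ * z ^ 2 + η * z) * Erf (γ₁ * z))
      = Real.sqrt (Real.pi / γ) * Real.exp (η ^ 2 / (4 * γ)) *
          Erf (γ₁ * η / (2 * Real.sqrt (γ ^ 2 + γ * γ₁ ^ 2))) := by
  set f : ℝ → ℝ := fun c => ∫ z : ℝ, Real.exp (-γ * z ^ 2 + η * z) * Erf (c * z) with hf_def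
  set g : ℝ → ℝ := fun c => Real.sqrt (Real.pi / γ) * Real.exp (η ^ 2 / (4 * γ)) *
      Erf (c * η / (2 * Real.sqrt (γ ^ 2 + γ * c ^ 2))) with hg_def
  set D : ℝ → ℝ := fun c => 2 / Real.sqrt Real.pi *
      (η / (2 * (γ + c ^ 2)) *
        (Real.sqrt (Real.pi / (γ + c ^ 2)) * Real.exp (η ^ 2 / (4 * (γ + c ^ 2))))) with hD_def
  -- derivative of f
  have hf : ∀ c : ℝ, HasDerivAt f (D c) c := by
    intro c
    have ha : 0 < γ + c ^ 2 := by positivity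
    have key := hasDerivAt_integral_of_dominated_loc_of_deriv_le
      (μ := (volume : Measure ℝ)) (x₀ := c) (s := Metric.ball c 1) (Metric.ball_mem_nhds c one_pos)
      (F := fun c z => Real.exp (-γ * z ^ 2 + η * z) * Erf (c * z))
      (F' := fun c z => Real.exp (-γ * z ^ 2 + η * z) *
        (2 / Real.sqrt Real.pi * Real.exp (-(c * z) ^ 2) * z))
      (bound := fun z => 2 / Real.sqrt Real.pi * (|z| * Real.exp (-γ * z ^ 2 + η * z)))
      ?_ ?_ ?_ ?_ ?_ ?_
    · have hD : D c = ∫ z : ℝ, Real.exp (-γ * z ^ 2 + η * z) *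
          (2 / Real.sqrt Real.pi * Real.exp (-(c * z) ^ 2) * z) := by
        have : ∀ z : ℝ, Real.exp (-γ * z ^ 2 + η * z) *
            (2 / Real.sqrt Real.pi * Real.exp (-(c * z) ^ 2) * z)
            = 2 / Real.sqrt Real.pi * (z * Real.exp (-(γ + c ^ 2) * z ^ 2 + η * z)) := by
          intro z
          have hsplit : Real.exp (-(γ + c ^ 2) * z ^ 2 + η * z)
              = Real.exp (-γ * z ^ 2 + η * z) * Real.exp (-(c * z) ^ 2) := by
            rw [← Real.exp_add]
            congr 1
            ring
          rw [hsplit]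
          ring
        simp_rw [this]
        rw [integral_const_mul, integral_mul_gauss_lin _ _ ha, hD_def]
      rw [hD]
      exact key.2
    · filter_upwards with x
      apply Continuous.aestronglyMeasurable
      exact (Continuous.mul (by continuity) (continuous_erf.comp (by continuity)))
    · -- integrability of F c
      apply ((integrable_abs_gauss γ η hγ).const_mul (2 / Real.sqrt Real.pi * |c|)).mono'
      · apply Continuous.aestronglyMeasurable
        exact (Continuous.mul (by continuity) (continuous_erf.comp (by continuity)))
      · filter_upwards with z
        rw [Real.norm_eq_abs, abs_mul, abs_of_pos (Real.exp_pos _)]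
        calc Real.exp (-γ * z ^ 2 + η * z) * |Erf (c * z)|
            ≤ Real.exp (-γ * z ^ 2 + η * z) * (2 / Real.sqrt Real.pi * |c * z|) :=
              mul_le_mul_of_nonneg_left (abs_erf_le _) (Real.exp_pos _).le
          _ = 2 / Real.sqrt Real.pi * |c| * (|z| * Real.exp (-γ * z ^ 2 + η * z)) := by
              rw [abs_mul]; ring
    · apply Continuous.aestronglyMeasurable; continuity
    · filter_upwards with z
      intro x _
      rw [Real.norm_eq_abs, abs_mul, abs_of_pos (Real.exp_pos _), abs_mul, abs_mul,
        abs_of_pos (Real.exp_pos _), abs_of_nonneg (by positivity : (0:ℝ) ≤ 2 / Real.sqrt Real.pi)]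
      have h1 : Real.exp (-(x * z) ^ 2) ≤ 1 := Real.exp_le_one_iff.2 (neg_nonpos.2 (sq_nonneg _))
      calc Real.exp (-γ * z ^ 2 + η * z) * (2 / Real.sqrt Real.pi * Real.exp (-(x * z) ^ 2) * |z|)
          ≤ Real.exp (-γ * z ^ 2 + η * z) * (2 / Real.sqrt Real.pi * 1 * |z|) := by
            apply mul_le_mul_of_nonneg_left _ (Real.exp_pos _).le
            apply mul_le_mul_of_nonneg_right _ (abs_nonneg z)
            exact mul_le_mul_of_nonneg_left h1 (by positivity)
        _ = 2 / Real.sqrt Real.pi * (|z| * Real.exp (-γ * z ^ 2 + η * z)) := by ring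
    · exact ((integrable_abs_gauss γ η hγ).const_mul _)
    · filter_upwards with z
      intro x _
      have h1 : HasDerivAt (fun x : ℝ => x * z) z x := hasDerivAt_mul_const z
      have h2 : HasDerivAt (fun x : ℝ => Erf (x * z))
          (2 / Real.sqrt Real.pi * Real.exp (-(x * z) ^ 2) * z) x := by
        have h3 := HasDerivAt.comp x (hasDerivAt_erf (x * z)) h1
        simpa [Function.comp_def, mul_assoc] using h3
      exact h2.const_mul _
  -- derivative of g
  have hg : ∀ c : ℝ, HasDerivAt g (D c) c := by
    intro c
    have ha : 0 < γ + c ^ 2 := by positivity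
    have hv : 0 < γ ^ 2 + γ * c ^ 2 := by positivity
    set s := Real.sqrt (γ ^ 2 + γ * c ^ 2) with hs_def
    have hs0 : 0 < s := Real.sqrt_pos.2 hv
    have hs2 : s ^ 2 = γ ^ 2 + γ * c ^ 2 := Real.sq_sqrt hv.le
    have hvd : HasDerivAt (fun c : ℝ => γ ^ 2 + γ * c ^ 2) (γ * (2 * c)) c := by
      have := ((hasDerivAt_pow 2 c).const_mul γ).const_add (γ ^ 2)
      simpa using this
    have hsd : HasDerivAt (fun c : ℝ => Real.sqrt (γ ^ 2 + γ * c ^ 2))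
        (1 / (2 * s) * (γ * (2 * c))) c :=
      (Real.hasDerivAt_sqrt hv.ne').comp c hvd
    have hdd : HasDerivAt (fun c : ℝ => 2 * Real.sqrt (γ ^ 2 + γ * c ^ 2))
        (2 * (1 / (2 * s) * (γ * (2 * c)))) c := hsd.const_mul 2
    have hnd : HasDerivAt (fun c : ℝ => c * η) η c := hasDerivAt_mul_const η
    have hne : 2 * Real.sqrt (γ ^ 2 + γ * c ^ 2) ≠ 0 := by positivity
    have hud : HasDerivAt (fun c : ℝ => c * η / (2 * Real.sqrt (γ ^ 2 + γ * c ^ 2)))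
        ((η * (2 * s) - c * η * (2 * (1 / (2 * s) * (γ * (2 * c))))) / (2 * s) ^ 2) c :=
      hnd.div hdd hne
    set u := c * η / (2 * s) with hu_def
    set u' := (η * (2 * s) - c * η * (2 * (1 / (2 * s) * (γ * (2 * c))))) / (2 * s) ^ 2 with hu'_def
    have hErfd : HasDerivAt (fun c : ℝ => Erf (c * η / (2 * Real.sqrt (γ ^ 2 + γ * c ^ 2))))
        (2 / Real.sqrt Real.pi * Real.exp (-u ^ 2) * u') c :=
      by have := (hasDerivAt_erf u).comp c hud; exact this
    have hgd : HasDerivAt g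
        (Real.sqrt (Real.pi / γ) * Real.exp (η ^ 2 / (4 * γ)) *
          (2 / Real.sqrt Real.pi * Real.exp (-u ^ 2) * u')) c :=
      hErfd.const_mul _
    convert hgd using 1
    -- value equality
    have hu' : u' = η * γ ^ 2 / (2 * s ^ 3) := by
      rw [hu'_def]
      field_simp
      linear_combination η * hs2
    have hu2 : u ^ 2 = c ^ 2 * η ^ 2 / (4 * (γ ^ 2 + γ * c ^ 2)) := by
      rw [hu_def, div_pow, mul_pow, mul_pow, hs2]
      norm_num
    have hexp : Real.exp (η ^ 2 / (4 * γ)) * Real.exp (-u ^ 2)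
        = Real.exp (η ^ 2 / (4 * (γ + c ^ 2))) := by
      rw [← Real.exp_add]
      congr 1
      rw [hu2]
      field_simp
      ring
    have hcoeff : Real.sqrt (Real.pi / γ) * γ ^ 2 / s ^ 3
        = Real.sqrt (Real.pi / (γ + c ^ 2)) / (γ + c ^ 2) := by
      have h1 : 0 ≤ Real.sqrt (Real.pi / γ) * γ ^ 2 / s ^ 3 := by positivity
      have h2 : 0 ≤ Real.sqrt (Real.pi / (γ + c ^ 2)) / (γ + c ^ 2) := by positivity
      have hsq : (Real.sqrt (Real.pi / γ) * γ ^ 2 / s ^ 3) ^ 2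
          = (Real.sqrt (Real.pi / (γ + c ^ 2)) / (γ + c ^ 2)) ^ 2 := by
        rw [div_pow, div_pow, mul_pow,
          Real.sq_sqrt (by positivity : (0:ℝ) ≤ Real.pi / γ),
          Real.sq_sqrt (by positivity : (0:ℝ) ≤ Real.pi / (γ + c ^ 2))]
        have h6 : (s ^ 3) ^ 2 = (γ ^ 2 + γ * c ^ 2) ^ 3 := by
          rw [← pow_mul, show 3 * 2 = 2 * 3 from rfl, pow_mul, hs2]
        rw [h6]
        field_simp
      calc Real.sqrt (Real.pi / γ) * γ ^ 2 / s ^ 3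
          = Real.sqrt ((Real.sqrt (Real.pi / γ) * γ ^ 2 / s ^ 3) ^ 2) := (Real.sqrt_sq h1).symm
        _ = Real.sqrt ((Real.sqrt (Real.pi / (γ + c ^ 2)) / (γ + c ^ 2)) ^ 2) := by rw [hsq]
        _ = Real.sqrt (Real.pi / (γ + c ^ 2)) / (γ + c ^ 2) := Real.sqrt_sq h2
    rw [hu', hD_def]
    have hre : Real.sqrt (Real.pi / γ) * Real.exp (η ^ 2 / (4 * γ)) *
        (2 / Real.sqrt Real.pi * Real.exp (-u ^ 2) * (η * γ ^ 2 / (2 * s ^ 3)))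
        = 2 / Real.sqrt Real.pi * (η / 2) * (Real.sqrt (Real.pi / γ) * γ ^ 2 / s ^ 3) *
          (Real.exp (η ^ 2 / (4 * γ)) * Real.exp (-u ^ 2)) := by
      ring
    rw [hre, hcoeff, hexp]
    have hπs : Real.sqrt Real.pi ≠ 0 := by positivity
    field_simp
  -- constancy
  have hconst : ∀ x y : ℝ, f x - g x = f y - g y := by
    have hd : ∀ c : ℝ, HasDerivAt (fun c => f c - g c) 0 c := by
      intro c
      have := (hf c).sub (hg c); rwa [sub_self] at this
    exact fun x y => is_const_of_deriv_eq_zero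
      (fun c => ((hd c).differentiableAt)) (fun c => (hd c).deriv) x y
  have h0 : f 0 - g 0 = 0 := by
    have hf0 : f 0 = 0 := by
      rw [hf_def]
      simp [erf_zero]
    have hg0 : g 0 = 0 := by
      rw [hg_def]
      simp [erf_zero]
    rw [hf0, hg0, sub_zero]
  have := hconst γ₁ 0
  rw [h0] at this
  have hfg : f γ₁ = g γ₁ := by linarith
  simpa [hf_def, hg_def] using hfg
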